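/- arXiv:2302.05651 — 3 statements merged into one kernel-verified Lean document; each statement's English description precedes it below -/
import Mathlib

section
/- Let (R, m) be a complete discrete valuation ring whose residue field k = R/m has characteristic different from 2 (equivalently, 2 is a unit of R). Let τ be a nontrivial ring involution of R, i.e. a ring automorphism τ : R → R with τ ∘ τ = id and τ ≠ id. Then there exists a uniformizer π of R (an element of m \ m², equivalently an irreducible element of R) such that τ(π) = -π. (This is Lemma 'uniformise_action' of the paper; note that τ(m) = m holds automatically since any ring automorphism of a local ring preserves the maximal ideal.) -/
open IsLocalRing

/-- **Lemma (uniformise_action).** Let `(R, m)` be a complete discrete valuation ring whose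
residue field has characteristic different from 2 (equivalently, `2` is a unit of `R`).
Let `τ` be a nontrivial ring involution of `R`. Then there exists a uniformizer `π` of `R`
(an element of `m \ m²`) such that `τ π = -π`. -/
theorem uniformise_action
    {R : Type*} [CommRing R] [IsDomain R] [IsDiscreteValuationRing R]
    [IsAdicComplete (IsLocalRing.maximalIdeal R) R]
    (h2 : IsUnit (2 : R))
    (τ : R ≃+* R) (hinv : ∀ r : R, τ (τ r) = r) (hne : τ ≠ RingEquiv.refl R) :
    ∃ π : R, π ∈ IsLocalRing.maximalIdeal R ∧ π ∉ IsLocalRing.maximalIdeal R ^ 2 ∧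
      τ π = -π := by
  obtain ⟨ϖ, hirr⟩ := IsDiscreteValuationRing.exists_irreducible R
  have hmem : ∀ (n : ℕ) (x : R), x ∈ maximalIdeal R ^ n ↔ ϖ ^ n ∣ x := fun n x => by
    rw [hirr.maximalIdeal_eq, Ideal.span_singleton_pow, Ideal.mem_span_singleton]
  have hmem1 : ∀ x : R, x ∈ maximalIdeal R ↔ ϖ ∣ x := fun x => by
    rw [hirr.maximalIdeal_eq, Ideal.mem_span_singleton]
  -- τ preserves the maximal ideal
  have hτm : ∀ r : R, ϖ ∣ r → ϖ ∣ τ r := by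
    intro r hr
    rw [← hmem1] at hr ⊢
    rw [mem_maximalIdeal, mem_nonunits_iff] at *
    intro hu
    exact hr (by simpa [hinv] using hu.map (τ.symm : R →+* R))
  -- the key involution identity : τ (τ x - x) = -(τ x - x)
  have hτδ : ∀ x : R, τ (τ x - x) = -(τ x - x) := fun x => by
    rw [map_sub, hinv]; ring
  by_cases h1 : ϖ ^ 2 ∣ τ ϖ - ϖ
  · by_cases hk : ∃ r : R, ¬ ϖ ∣ (τ r - r)
    · -- residue involution nontrivial: use a unit anti-invariant element
      obtain ⟨r, hr⟩ := hk
      have hu : IsUnit (τ r - r) := by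
        by_contra hnu
        exact hr ((hmem1 _).1 (mem_maximalIdeal _ |>.2 hnu))
      have hu' : IsUnit (r - τ r) := by
        have := hu.neg; simpa using this
      refine ⟨(r - τ r) * (ϖ + τ ϖ), ?_, ?_, ?_⟩
      · rw [hmem1]
        exact Dvd.dvd.mul_left (dvd_add (dvd_refl ϖ) (hτm ϖ (dvd_refl ϖ))) _
      · rw [hmem 2]
        intro hdvd
        rw [IsUnit.dvd_mul_left hu'] at hdvd
        have h2ϖ : ϖ ^ 2 ∣ 2 * ϖ := by
          have : (2 : R) * ϖ = (ϖ + τ ϖ) - (τ ϖ - ϖ) := by ring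
          rw [this]; exact dvd_sub hdvd h1
        rw [IsUnit.dvd_mul_left h2] at h2ϖ
        have : ϖ * ϖ ∣ ϖ * 1 := by rw [mul_one, ← pow_two]; exact h2ϖ
        rw [mul_dvd_mul_iff_left hirr.ne_zero] at this
        exact hirr.not_isUnit (isUnit_of_dvd_one this)
      · simp only [map_mul, map_add, map_sub, hinv]; ring
    · -- τ is the identity mod m and τ ϖ ≡ ϖ mod m²: contradiction with nontriviality
      exfalso
      push_neg at hk
      have main : ∀ n : ℕ, (∀ x : R, ϖ ^ (n + 1) ∣ τ x - x) ∧ ϖ ^ (n + 2) ∣ τ ϖ - ϖ := by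
        intro n
        induction n with
        | zero => exact ⟨fun x => by simpa using hk x, by simpa using h1⟩
        | succ n ih =>
          obtain ⟨H1, H2⟩ := ih
          -- powers of ϖ
          have hpow : ∀ k : ℕ, ϖ ^ (n + 1 + k) ∣ τ (ϖ ^ k) - ϖ ^ k := by
            intro k
            induction k with
            | zero => simp
            | succ k ihk =>
              have hrw : τ (ϖ ^ (k + 1)) - ϖ ^ (k + 1)
                  = τ ϖ * (τ (ϖ ^ k) - ϖ ^ k) + (τ ϖ - ϖ) * ϖ ^ k := by
                rw [pow_succ', map_mul]; ring
              rw [hrw]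
              refine dvd_add ?_ ?_
              · have : ϖ ^ (n + 1 + (k + 1)) = ϖ * ϖ ^ (n + 1 + k) := by
                  rw [← pow_succ']; ring_nf
                rw [this]
                exact mul_dvd_mul (hτm ϖ (dvd_refl ϖ)) ihk
              · have : ϖ ^ (n + 1 + (k + 1)) = ϖ ^ (n + 2) * ϖ ^ k := by
                  rw [← pow_add]; ring_nf
                rw [this]
                exact mul_dvd_mul H2 (dvd_refl _)
          -- δ increases valuation on deep elements
          have hdeep : ∀ (k : ℕ) (x : R), ϖ ^ k ∣ x → ϖ ^ (k + 1) ∣ τ x - x := by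
            intro k x hx
            obtain ⟨z, rfl⟩ := hx
            have hrw : τ (ϖ ^ k * z) - ϖ ^ k * z
                = τ (ϖ ^ k) * (τ z - z) + (τ (ϖ ^ k) - ϖ ^ k) * z := by
              rw [map_mul]; ring
            rw [hrw]
            refine dvd_add ?_ ?_
            · have hτpk : ϖ ^ k ∣ τ (ϖ ^ k) := by
                rw [map_pow]; exact pow_dvd_pow_of_dvd (hτm ϖ (dvd_refl ϖ)) k
              calc ϖ ^ (k + 1) ∣ ϖ ^ k * ϖ ^ (n + 1) := by
                    rw [← pow_add]; exact pow_dvd_pow ϖ (by omega)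
                _ ∣ τ (ϖ ^ k) * (τ z - z) := mul_dvd_mul hτpk (H1 z)
            · exact Dvd.dvd.mul_right (dvd_trans (pow_dvd_pow ϖ (by omega)) (hpow k)) z
          constructor
          · intro x
            have hd : ϖ ^ (n + 1 + 1) ∣ τ (τ x - x) - (τ x - x) := hdeep (n + 1) _ (H1 x)
            rw [hτδ] at hd
            have : ϖ ^ (n + 2) ∣ 2 * (τ x - x) := by
              have h' : -(τ x - x) - (τ x - x) = -(2 * (τ x - x)) := by ring
              rw [h', dvd_neg] at hd
              exact hd
            rwa [IsUnit.dvd_mul_left h2] at this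
          · have hd : ϖ ^ (n + 2 + 1) ∣ τ (τ ϖ - ϖ) - (τ ϖ - ϖ) := hdeep (n + 2) _ H2
            rw [hτδ] at hd
            have : ϖ ^ (n + 3) ∣ 2 * (τ ϖ - ϖ) := by
              have h' : -(τ ϖ - ϖ) - (τ ϖ - ϖ) = -(2 * (τ ϖ - ϖ)) := by ring
              rw [h', dvd_neg] at hd
              exact hd
            rwa [IsUnit.dvd_mul_left h2] at this
      -- conclude τ = id
      apply hne
      ext x
      have hzero : τ x - x = 0 := by
        refine IsHausdorff.haus' (I := maximalIdeal R) _ fun n => ?_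
        have : τ x - x ∈ maximalIdeal R ^ n := by
          rw [hmem]
          exact dvd_trans (pow_dvd_pow ϖ (Nat.le_succ n)) ((main n).1 x)
        simpa only [← Ideal.one_eq_top, smul_eq_mul, mul_one, SModEq.zero] using this
      simpa [sub_eq_zero] using hzero
  · -- ϖ - τ ϖ is already a uniformizer
    refine ⟨ϖ - τ ϖ, ?_, ?_, ?_⟩
    · rw [hmem1]
      exact dvd_sub (dvd_refl ϖ) (hτm ϖ (dvd_refl ϖ))
    · rw [hmem 2]
      intro hdvd
      rw [show ϖ - τ ϖ = -(τ ϖ - ϖ) by ring, dvd_neg] at hdvd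
      exact h1 hdvd
    · rw [map_sub, hinv]; ring
end

section
/- Let (R, m) be a discrete valuation ring and let τ be a ring involution of R (a ring automorphism with τ ∘ τ = id). Suppose that the induced automorphism of the residue field R/m is not the identity, i.e. there exists r ∈ R with τ(r) - r ∉ m. Then there exists a uniformizer π of R (an element of m \ m²) such that τ(π) = -π. (This is Case 1 of Step 2 of the proof of the paper's Lemma 'uniformise_action'; neither completeness of R nor any assumption on the residue characteristic is used in this case.) -/
/-- Let `(R, m)` be a DVR and `τ` a ring involution of `R` whose induced automorphism of the
residue field `R/m` is not the identity, i.e. there is `r : R` with `τ r - r ∉ m`.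
Then there exists a uniformizer `π` of `R` (an element of `m \ m²`) with `τ π = -π`. -/
theorem uniformise_action_residue_nontrivial
    {R : Type*} [CommRing R] [IsDomain R] [IsDiscreteValuationRing R]
    (τ : R ≃+* R) (hinv : ∀ r : R, τ (τ r) = r)
    (hres : ∃ r : R, τ r - r ∉ IsLocalRing.maximalIdeal R) :
    ∃ π : R, π ∈ IsLocalRing.maximalIdeal R ∧ π ∉ IsLocalRing.maximalIdeal R ^ 2 ∧
      τ π = -π := by
  obtain ⟨r, hr⟩ := hres
  have ha : IsUnit (τ r - r) := by
    by_contra h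
    exact hr ((IsLocalRing.mem_maximalIdeal _).2 h)
  obtain ⟨t, ht⟩ := IsDiscreteValuationRing.exists_irreducible R
  -- τ preserves units
  have hunit : ∀ x : R, IsUnit x ↔ IsUnit (τ x) := by
    intro x
    refine ⟨fun h => h.map τ, fun h => ?_⟩
    have := h.map τ
    rwa [hinv] at this
  -- τ t is irreducible
  have hτt : Irreducible (τ t) := by
    constructor
    · exact fun h => ht.not_isUnit ((hunit t).2 h)
    · intro b c hbc
      have : t = τ.symm b * τ.symm c := by
        have := congrArg τ.symm hbc
        simpa using this
      rcases ht.isUnit_or_isUnit this with h | h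
      · left
        have := (hunit (τ.symm b)).1 h
        simpa using this
      · right
        have := (hunit (τ.symm c)).1 h
        simpa using this
  -- τ t = u * t for a unit u
  obtain ⟨u, hu⟩ := IsDiscreteValuationRing.associated_of_irreducible R ht hτt
  -- t * u = τ t
  have ht0 : t ≠ 0 := ht.ne_zero
  have huu : τ (u : R) * (u : R) = 1 := by
    have h1 : τ (t * (u : R)) = t := by rw [hu, hinv]
    rw [map_mul, ← hu] at h1
    have h2 : (τ (u : R) * (u : R)) * t = 1 * t := by linear_combination h1
    exact mul_right_cancel₀ ht0 h2
  -- key construction: if c is a unit with τ c * u = -c, then π = c * t works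
  have key : ∀ c : R, IsUnit c → τ c * (u : R) = -c →
      ∃ π : R, π ∈ IsLocalRing.maximalIdeal R ∧ π ∉ IsLocalRing.maximalIdeal R ^ 2 ∧
        τ π = -π := by
    intro c hc hcu
    refine ⟨c * t, ?_, ?_, ?_⟩
    · exact Ideal.mul_mem_left _ _ ((IsLocalRing.mem_maximalIdeal _).2 ht.not_isUnit)
    · intro hmem
      have hspan : IsLocalRing.maximalIdeal R = Ideal.span {t} :=
        (IsDiscreteValuationRing.irreducible_iff_uniformizer t).1 ht
      rw [hspan, Ideal.span_singleton_pow, Ideal.mem_span_singleton] at hmem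
      obtain ⟨x, hx⟩ := hmem
      have : c * t = t * (t * x) := by rw [hx]; ring
      have hct : c = t * x := mul_right_cancel₀ ht0 (by linear_combination this)
      exact ht.not_isUnit (isUnit_of_mul_isUnit_left (hct ▸ hc))
    · rw [map_mul, ← hu]
      linear_combination t * hcu
  by_cases hc1 : IsUnit (r - (u : R) * τ r)
  · refine key _ hc1 ?_
    rw [map_sub, map_mul, hinv]
    linear_combination (-r) * huu
  · -- then 1 - u must be a unit
    have hc1m : r - (u : R) * τ r ∈ IsLocalRing.maximalIdeal R :=
      (IsLocalRing.mem_maximalIdeal _).2 hc1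
    have hc2 : IsUnit (1 - (u : R)) := by
      by_contra h
      have hc2m : (1 - (u : R)) ∈ IsLocalRing.maximalIdeal R :=
        (IsLocalRing.mem_maximalIdeal _).2 h
      have : τ r - r ∈ IsLocalRing.maximalIdeal R := by
        have := Ideal.sub_mem _ (Ideal.mul_mem_left _ (τ r) hc2m) hc1m
        have heq : τ r * (1 - (u : R)) - (r - (u : R) * τ r) = τ r - r := by ring
        rwa [heq] at this
      exact hr this
    refine key _ hc2 ?_
    rw [map_sub, map_one]
    linear_combination -huu
end

section
/- Let (R, m) be a complete discrete valuation ring in which 2 is a unit, and let τ be a ring involution of R inducing the identity on the residue field R/m, i.e. τ(r) - r ∈ m for every r ∈ R. If there exists a uniformizer t of R with τ(t) - t ∈ m², then τ = id. Equivalently: if τ is a nontrivial involution of R inducing the identity on R/m, then τ(t) - t ∉ m² for every uniformizer t of R. (This is the contradiction reached in Case 2 of Step 2 of the proof of the paper's Lemma 'uniformise_action': the hypotheses produce a τ-fixed uniformizer s, and since 2 is a unit every element decomposes as the sum of a τ-fixed part and a τ-anti-fixed part, the anti-fixed parts lying in m and hence, being of the form (unit)·s^n with τ acting trivially modulo m,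 necessarily zero.) -/
/-- Let `(R, m)` be a complete DVR in which `2` is a unit, and let `τ` be a ring involution
of `R` inducing the identity on the residue field, i.e. `τ r - r ∈ m` for all `r`. If there
exists a uniformizer `t` of `R` with `τ t - t ∈ m²`, then `τ` is the identity. -/
theorem involution_trivial_of_fixed_mod_sq
    {R : Type*} [CommRing R] [IsDomain R] [IsDiscreteValuationRing R]
    [IsAdicComplete (IsLocalRing.maximalIdeal R) R]
    (h2 : IsUnit (2 : R))
    (τ : R ≃+* R) (hinv : ∀ r : R, τ (τ r) = r)
    (hres : ∀ r : R, τ r - r ∈ IsLocalRing.maximalIdeal R)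
    (ht : ∃ t : R, t ∈ IsLocalRing.maximalIdeal R ∧ t ∉ IsLocalRing.maximalIdeal R ^ 2 ∧
      τ t - t ∈ IsLocalRing.maximalIdeal R ^ 2) :
    τ = RingEquiv.refl R := by
  obtain ⟨t, htm, htm2, hτt⟩ := ht
  obtain ⟨c, hc⟩ := h2
  have h20 : (2 : R) ≠ 0 := by
    intro h; exact c.ne_zero (by rw [hc, h])
  set k : R := ((c⁻¹ : Rˣ) : R) with hk_def
  have hk : 2 * k = 1 := by
    rw [← hc, hk_def]
    exact_mod_cast c.mul_inv
  have hτ2 : τ (2 : R) = 2 := by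
    simp [show ((2 : R) = 1 + 1) by norm_num]
  have hτk : τ k = k := by
    have h1 : 2 * τ k = 2 * k := by
      have : τ (2 * k) = 1 := by rw [hk, map_one]
      rw [map_mul, hτ2] at this
      rw [this, hk]
    exact mul_left_cancel₀ h20 h1
  -- s := (t + τ t) / 2 is a τ-fixed uniformizer
  set s : R := k * (t + τ t) with hs_def
  have hτs : τ s = s := by
    simp only [hs_def, map_mul, map_add, hτk, hinv t]
    ring
  have hsm : s ∈ IsLocalRing.maximalIdeal R := by
    have : t + τ t ∈ IsLocalRing.maximalIdeal R := by
      have := (IsLocalRing.maximalIdeal R).add_mem htm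
        ((IsLocalRing.maximalIdeal R).add_mem (hres t) htm)
      simpa [add_comm, add_left_comm, sub_add_cancel] using this
    exact Ideal.mul_mem_left _ _ this
  have hsm2 : s ∉ IsLocalRing.maximalIdeal R ^ 2 := by
    intro h
    apply htm2
    have h2s : 2 * s = 2 * t + (τ t - t) := by
      rw [hs_def, ← mul_assoc, hk]; ring
    have h2t : 2 * t ∈ IsLocalRing.maximalIdeal R ^ 2 := by
      have : 2 * t = 2 * s - (τ t - t) := by rw [h2s]; ring
      rw [this]
      exact Submodule.sub_mem _ (Ideal.mul_mem_left _ _ h) hτt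
    have : k * (2 * t) ∈ IsLocalRing.maximalIdeal R ^ 2 := Ideal.mul_mem_left _ _ h2t
    have ht' : t = k * (2 * t) := by rw [← mul_assoc, mul_comm k 2, hk, one_mul]
    rwa [← ht'] at this
  have hs0 : s ≠ 0 := by
    intro h; exact hsm2 (h ▸ zero_mem _)
  obtain ⟨ϖ, hϖ⟩ := IsDiscreteValuationRing.exists_irreducible R
  have hspan := IsDiscreteValuationRing.irreducible_iff_uniformizer ϖ |>.mp hϖ
  obtain ⟨d, hd⟩ : ∃ d : R, s = d * ϖ := by
    have : s ∈ Ideal.span {ϖ} := hspan ▸ hsm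
    obtain ⟨d, hd⟩ := Ideal.mem_span_singleton'.mp this
    exact ⟨d, hd.symm⟩
  have hdu : IsUnit d := by
    by_contra hdu
    apply hsm2
    have hdm : d ∈ IsLocalRing.maximalIdeal R := hdu
    have hϖm : ϖ ∈ IsLocalRing.maximalIdeal R := hspan ▸ Ideal.mem_span_singleton_self ϖ
    rw [hd, pow_two]
    exact Ideal.mul_mem_mul hdm hϖm
  have hsirr : Irreducible s := by
    have : Associated ϖ s := ⟨hdu.unit, by rw [hd, IsUnit.unit_spec, mul_comm]⟩
    exact this.irreducible hϖ
  -- now show τ = id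
  ext r
  show τ r = r
  by_contra hne
  set b : R := r - τ r with hb_def
  have hb0 : b ≠ 0 := fun h => hne (by
    have : r = τ r := by linear_combination h
    exact this.symm)
  have hτb : τ b = -b := by
    simp [hb_def, map_sub, hinv r]
  obtain ⟨n, u, hu⟩ := IsDiscreteValuationRing.eq_unit_mul_pow_irreducible hb0 hsirr
  have key : τ (u : R) * s ^ n = -(u : R) * s ^ n := by
    have h1 : τ b = τ (u : R) * τ s ^ n := by rw [hu, map_mul, map_pow]
    rw [hτs] at h1
    rw [← h1, hτb, hu]; ring
  have hsn : (s : R) ^ n ≠ 0 := pow_ne_zero n hs0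
  have hτu : τ (u : R) = -(u : R) := mul_right_cancel₀ hsn key
  have hmem : τ (u : R) - (u : R) ∈ IsLocalRing.maximalIdeal R := hres u
  rw [hτu] at hmem
  have hmem2 : (2 : R) * u ∈ IsLocalRing.maximalIdeal R := by
    have := (IsLocalRing.maximalIdeal R).neg_mem hmem
    have heq : -(-(u : R) - u) = 2 * u := by ring
    rwa [heq] at this
  have hu2 : IsUnit ((2 : R) * u) := (IsUnit.of_mul_eq_one (a := 2) k hk).mul u.isUnit
  exact Ideal.IsMaximal.ne_top inferInstance
    (Ideal.eq_top_of_isUnit_mem _ hmem2 hu2)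
end
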